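/- Let V : ℝ^d → ℝ be bounded Lipschitz, θ > 0, μ ∈ P₁(ℝ^d). Suppose (S_n) is a nondecreasing sequence of subsets of P₁(ℝ^d) (each closed under the problem's constraints) and (μ_n) with μ_n ∈ S_n, W₁(μ_n, μ) → 0, such that for every ρ ∈ P₁(ℝ^d) there exist ρ_n ∈ S_n with W₁(ρ_n, ρ) → 0. Let v_n = inf{∫ V dν : ν ∈ S_n, W₁(ν, μ_n) ≤ θ} and v = inf{∫ V dν : ν ∈ P₁(ℝ^d), W₁(ν, μ) ≤ θ}. Then v_n → v. -/

import Mathlib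

/-!
Mixing a measure `ν` of the ball `W₁(ν, μ) ≤ θ` with `μ` into `(1 - t) ν + t μ` moves it to the
ball of radius `(1 - t) θ` and changes `∫ V` by at most `2 C t`. So almost optimal measures for
`v` can be taken strictly inside the ball; their approximations `ρₙ ∈ Sₙ` eventually satisfy
`W₁(ρₙ, μₙ) ≤ θ`, and `∫ V dρₙ → ∫ V dν` since `V` is Lipschitz: `limsup vₙ ≤ v`. Conversely a
competitor for `vₙ` lies within `θ + W₁(μₙ, μ)` of `μ`, and after mixing it competes for `v`:
`liminf vₙ ≥ v`. The triangle inequality for `W₁` comes from gluing two couplings along a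
disintegration.
-/

open MeasureTheory Metric Set Filter Topology ENNReal NNReal

noncomputable def W1 {X : Type*} [MeasurableSpace X] [PseudoMetricSpace X]
    (μ ν : Measure X) : ℝ≥0∞ :=
  ⨅ (π : Measure (X × X)) (_ : π.map Prod.fst = μ) (_ : π.map Prod.snd = ν),
    ∫⁻ p, ENNReal.ofReal (dist p.1 p.2) ∂π

noncomputable def robustVal (d : ℕ) (V : EuclideanSpace ℝ (Fin d) → ℝ)
    (μ : Measure (EuclideanSpace ℝ (Fin d))) (r : ℝ) : ℝ :=
  sInf {s | ∃ ν : Measure (EuclideanSpace ℝ (Fin d)), IsProbabilityMeasure ν ∧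
    Integrable (fun x => ‖x‖) ν ∧ W1 ν μ ≤ ENNReal.ofReal r ∧ s = ∫ x, V x ∂ν}

open ProbabilityTheory

lemma exists_pos_le_one_mul_lt (c : ℝ) {ε : ℝ} (hε : 0 < ε) :
    ∃ t : ℝ, 0 < t ∧ t ≤ 1 ∧ c * t < ε := by
  obtain ⟨t, ht, hct⟩ := exists_pos_mul_lt hε |c|
  refine ⟨min t 1, lt_min ht one_pos, min_le_right _ _, ?_⟩
  calc c * min t 1 ≤ |c| * min t 1 := by gcongr; exact le_abs_self c
    _ ≤ |c| * t := by gcongr; exact min_le_left _ _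
    _ < ε := hct

lemma map_compProd_comap_snd {α β γ : Type*} [MeasurableSpace α] [MeasurableSpace β]
    [MeasurableSpace γ] (μ : Measure (α × β)) [SFinite μ] (κ : Kernel β γ) [IsSFiniteKernel κ] :
    (μ ⊗ₘ κ.comap Prod.snd measurable_snd).map (fun p => (p.1.2, p.2)) = μ.map Prod.snd ⊗ₘ κ := by
  refine Measure.ext_of_lintegral _ fun f hf => ?_
  rw [lintegral_map hf (by fun_prop),
    Measure.lintegral_compProd (f := fun p : (α × β) × γ => f (p.1.2, p.2)) (by fun_prop),
    Measure.lintegral_compProd hf,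
    lintegral_map (Measurable.lintegral_kernel_prod_right' hf) measurable_snd]
  simp [Kernel.comap_apply]

section Wasserstein

variable {X : Type*} [MeasurableSpace X]

lemma map_fst_map_diag (μ : Measure X) : (μ.map Function.diag).map Prod.fst = μ := by
  rw [Measure.map_map measurable_fst (by fun_prop)]
  exact Measure.map_id

lemma map_snd_map_diag (μ : Measure X) : (μ.map Function.diag).map Prod.snd = μ := by
  rw [Measure.map_map measurable_snd (by fun_prop)]
  exact Measure.map_id

variable [PseudoMetricSpace X]

lemma W1_le_lintegral {μ ν : Measure X} {π : Measure (X × X)} (h₁ : π.map Prod.fst = μ)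
    (h₂ : π.map Prod.snd = ν) : W1 μ ν ≤ ∫⁻ p, ENNReal.ofReal (dist p.1 p.2) ∂π :=
  iInf₂_le_of_le π h₁ (iInf_le _ h₂)

lemma le_mul_W1 {μ ν : Measure X} [IsProbabilityMeasure μ] [IsProbabilityMeasure ν]
    {a c : ℝ≥0∞} (hc : c ≠ ∞)
    (h : ∀ π : Measure (X × X), π.map Prod.fst = μ → π.map Prod.snd = ν →
      a ≤ c * ∫⁻ p, ENNReal.ofReal (dist p.1 p.2) ∂π) :
    a ≤ c * W1 μ ν := by
  rcases eq_or_ne c 0 with rfl | hc₀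
  · simpa using h (μ.prod ν) (by simp) (by simp)
  · simp only [W1, ENNReal.mul_iInf_of_ne hc₀ hc]
    exact le_iInf₂ fun π h₁ => le_iInf (h π h₁)

variable [OpensMeasurableSpace X] [SecondCountableTopology X]

lemma lintegral_dist_map_diag (μ : Measure X) :
    ∫⁻ p, ENNReal.ofReal (dist p.1 p.2) ∂(μ.map Function.diag) = 0 := by
  have hdiag : Measurable (Function.diag : X → X × X) := by fun_prop
  simp [lintegral_map measurable_dist.ennreal_ofReal hdiag]

lemma W1_self (μ : Measure X) : W1 μ μ = 0 :=
  nonpos_iff_eq_zero.1 <| (W1_le_lintegral (map_fst_map_diag μ) (map_snd_map_diag μ)).trans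
    (lintegral_dist_map_diag μ).le

lemma W1_comm (μ ν : Measure X) : W1 μ ν = W1 ν μ := by
  suffices ∀ μ ν : Measure X, W1 μ ν ≤ W1 ν μ from le_antisymm (this μ ν) (this ν μ)
  intro μ ν
  refine le_iInf₂ fun π h₁ => le_iInf fun h₂ => ?_
  refine (W1_le_lintegral (π := π.map Prod.swap) ?_ ?_).trans ?_
  · rwa [Measure.map_map measurable_fst measurable_swap]
  · rwa [Measure.map_map measurable_snd measurable_swap]
  · simp [lintegral_map measurable_dist.ennreal_ofReal measurable_swap, dist_comm]

lemma W1_triangle [StandardBorelSpace X] [Nonempty X] (μ ν ρ : Measure X) [IsFiniteMeasure μ]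
    [IsFiniteMeasure ν] : W1 μ ρ ≤ W1 μ ν + W1 ν ρ := by
  refine ENNReal.le_iInf₂_add_iInf₂ fun π₁ h₁ π₂ h₂ => ENNReal.le_iInf_add_iInf fun h₁' h₂' => ?_
  have : IsFiniteMeasure π₁ :=
    (Measure.isFiniteMeasure_map_iff measurable_fst.aemeasurable).1 (h₁ ▸ inferInstance)
  have : IsFiniteMeasure π₂ :=
    (Measure.isFiniteMeasure_map_iff measurable_fst.aemeasurable).1 (h₂ ▸ inferInstance)
  -- `τ` is a law of a triple `(x, y, z)` with `(x, y) ∼ π₁` and `(y, z) ∼ π₂`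
  set τ := π₁ ⊗ₘ π₂.condKernel.comap Prod.snd measurable_snd
  have hτ₁ : τ.map Prod.fst = π₁ := Measure.fst_compProd π₁ _
  have hτ₂ : τ.map (fun p => (p.1.2, p.2)) = π₂ := by
    rw [map_compProd_comap_snd, h₁', ← h₂]
    exact π₂.disintegrate π₂.condKernel
  have hx : Measurable (fun p : (X × X) × X => (p.1.1, p.2)) := by fun_prop
  have hyz : Measurable (fun p : (X × X) × X => (p.1.2, p.2)) := by fun_prop
  have hcost : Measurable (fun p : X × X => ENNReal.ofReal (dist p.1 p.2)) :=
    measurable_dist.ennreal_ofReal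
  refine (W1_le_lintegral (π := τ.map fun p => (p.1.1, p.2)) ?_ ?_).trans ?_
  · rw [Measure.map_map measurable_fst hx, ← h₁, ← hτ₁,
      Measure.map_map measurable_fst measurable_fst]
    rfl
  · rw [Measure.map_map measurable_snd hx, ← h₂', ← hτ₂, Measure.map_map measurable_snd hyz]
    rfl
  calc ∫⁻ p, ENNReal.ofReal (dist p.1 p.2) ∂(τ.map fun p => (p.1.1, p.2))
      ≤ ∫⁻ p, (ENNReal.ofReal (dist p.1.1 p.1.2) + ENNReal.ofReal (dist p.1.2 p.2)) ∂τ := by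
        rw [lintegral_map hcost hx]
        refine lintegral_mono fun p => ?_
        rw [← ENNReal.ofReal_add dist_nonneg dist_nonneg]
        exact ENNReal.ofReal_le_ofReal (dist_triangle _ _ _)
    _ = ∫⁻ p, ENNReal.ofReal (dist p.1 p.2) ∂π₁ + ∫⁻ p, ENNReal.ofReal (dist p.1 p.2) ∂π₂ := by
        rw [lintegral_add_left (f := fun p : (X × X) × X => ENNReal.ofReal (dist p.1.1 p.1.2))
          (hcost.comp measurable_fst), ← hτ₁, ← hτ₂,
          lintegral_map hcost measurable_fst, lintegral_map hcost hyz]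

lemma eventually_W1_lt [StandardBorelSpace X] [Nonempty X] {ι : Type*} {l : Filter ι}
    {ρ μ' : ι → Measure X} {ν μ : Measure X} [∀ i, IsFiniteMeasure (ρ i)] [IsFiniteMeasure ν]
    [IsFiniteMeasure μ] (hρ : Tendsto (fun i => W1 (ρ i) ν) l (𝓝 0))
    (hμ' : Tendsto (fun i => W1 (μ' i) μ) l (𝓝 0)) {r : ℝ≥0∞} (h : W1 ν μ < r) :
    ∀ᶠ i in l, W1 (ρ i) (μ' i) < r := by
  have hsum : Tendsto (fun i => W1 (ρ i) ν + W1 ν μ + W1 μ (μ' i)) l (𝓝 (0 + W1 ν μ + 0)) :=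
    (hρ.add tendsto_const_nhds).add (by simpa only [W1_comm μ] using hμ')
  filter_upwards [hsum.eventually_lt_const (by simpa using h)] with i hi
  calc W1 (ρ i) (μ' i) ≤ W1 (ρ i) μ + W1 μ (μ' i) := W1_triangle _ _ _
    _ ≤ W1 (ρ i) ν + W1 ν μ + W1 μ (μ' i) := by gcongr; exact W1_triangle _ _ _
    _ < r := hi

lemma edist_integral_le_mul_W1 {V : X → ℝ} {K : ℝ≥0} (hV : LipschitzWith K V)
    {α β : Measure X} [IsProbabilityMeasure α] [IsProbabilityMeasure β]
    (hα : Integrable V α) (hβ : Integrable V β) :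
    edist (∫ x, V x ∂α) (∫ x, V x ∂β) ≤ K * W1 α β := by
  refine le_mul_W1 coe_ne_top fun π h₁ h₂ => ?_
  subst h₁ h₂
  have hα' : Integrable (fun p : X × X => V p.1) π := hα.comp_measurable measurable_fst
  have hβ' : Integrable (fun p : X × X => V p.2) π := hβ.comp_measurable measurable_snd
  rw [integral_map measurable_fst.aemeasurable hα.aestronglyMeasurable,
    integral_map measurable_snd.aemeasurable hβ.aestronglyMeasurable]
  calc edist (∫ p, V p.1 ∂π) (∫ p, V p.2 ∂π) = ‖∫ p, (V p.1 - V p.2) ∂π‖ₑ := by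
        rw [integral_sub hα' hβ', edist_eq_enorm_sub]
    _ ≤ ∫⁻ p, ‖V p.1 - V p.2‖ₑ ∂π := enorm_integral_le_lintegral_enorm _
    _ ≤ ∫⁻ p, K * ENNReal.ofReal (dist p.1 p.2) ∂π := lintegral_mono fun p => by
        rw [← edist_eq_enorm_sub, ← edist_dist]
        exact hV p.1 p.2
    _ = K * ∫⁻ p, ENNReal.ofReal (dist p.1 p.2) ∂π :=
        lintegral_const_mul _ measurable_dist.ennreal_ofReal

lemma tendsto_integral_of_tendsto_W1 {ι : Type*} {l : Filter ι} {V : X → ℝ} {K : ℝ≥0}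
    (hV : LipschitzWith K V) {ρ : ι → Measure X} {ρ' : Measure X}
    [∀ i, IsProbabilityMeasure (ρ i)] [IsProbabilityMeasure ρ']
    (hρ : ∀ i, Integrable V (ρ i)) (hρ' : Integrable V ρ')
    (h : Tendsto (fun i => W1 (ρ i) ρ') l (𝓝 0)) :
    Tendsto (fun i => ∫ x, V x ∂ρ i) l (𝓝 (∫ x, V x ∂ρ')) := by
  rw [tendsto_iff_edist_tendsto_0]
  have hK : Tendsto (fun i => (K : ℝ≥0∞) * W1 (ρ i) ρ') l (𝓝 0) := by
    simpa using ENNReal.Tendsto.const_mul h (Or.inr coe_ne_top)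
  exact tendsto_of_tendsto_of_tendsto_of_le_of_le tendsto_const_nhds hK (fun i => zero_le)
    fun i => edist_integral_le_mul_W1 hV (hρ i) hρ'

end Wasserstein

section Bounded

variable {X : Type*} [MeasurableSpace X] {μ : Measure X} {f : X → ℝ} {C : ℝ}

lemma integrable_of_abs_le [IsFiniteMeasure μ] (hf : Measurable f) (hC : ∀ x, |f x| ≤ C) :
    Integrable f μ :=
  .of_bound hf.aestronglyMeasurable C (ae_of_all _ fun x => by simpa using hC x)

lemma abs_integral_le_of_abs_le [IsProbabilityMeasure μ] (hC : ∀ x, |f x| ≤ C) :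
    |∫ x, f x ∂μ| ≤ C := by
  simpa using norm_integral_le_of_norm_le_const (μ := μ) (f := f) (C := C)
    (ae_of_all _ fun x => by simpa using hC x)

end Bounded

section Mixture

variable {X : Type*} [MeasurableSpace X]

noncomputable def mixture (t : ℝ) (ν μ : Measure X) : Measure X :=
  ENNReal.ofReal (1 - t) • ν + ENNReal.ofReal t • μ

variable {t : ℝ} {ν μ : Measure X}

lemma isProbabilityMeasure_mixture [IsProbabilityMeasure ν] [IsProbabilityMeasure μ]
    (ht₀ : 0 ≤ t) (ht₁ : t ≤ 1) : IsProbabilityMeasure (mixture t ν μ) := by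
  constructor
  simp [mixture, ← ENNReal.ofReal_add (sub_nonneg.2 ht₁) ht₀]

lemma MeasureTheory.Integrable.mixture {f : X → ℝ} (hν : Integrable f ν) (hμ : Integrable f μ) :
    Integrable f (mixture t ν μ) :=
  (hν.smul_measure ofReal_ne_top).add_measure (hμ.smul_measure ofReal_ne_top)

lemma integral_mixture {f : X → ℝ} (hν : Integrable f ν) (hμ : Integrable f μ)
    (ht₀ : 0 ≤ t) (ht₁ : t ≤ 1) :
    ∫ x, f x ∂(mixture t ν μ) = (1 - t) * ∫ x, f x ∂ν + t * ∫ x, f x ∂μ := by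
  rw [mixture, integral_add_measure (hν.smul_measure ofReal_ne_top)
      (hμ.smul_measure ofReal_ne_top), integral_smul_measure, integral_smul_measure,
    toReal_ofReal (sub_nonneg.2 ht₁), toReal_ofReal ht₀, smul_eq_mul, smul_eq_mul]

lemma integral_mixture_le [IsProbabilityMeasure ν] [IsProbabilityMeasure μ] {f : X → ℝ} {C : ℝ}
    (hf : Measurable f) (hC : ∀ x, |f x| ≤ C) (ht₀ : 0 ≤ t) (ht₁ : t ≤ 1) :
    ∫ x, f x ∂(mixture t ν μ) ≤ ∫ x, f x ∂ν + 2 * C * t := by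
  rw [integral_mixture (integrable_of_abs_le hf hC) (integrable_of_abs_le hf hC) ht₀ ht₁]
  nlinarith [abs_le.1 (abs_integral_le_of_abs_le (μ := ν) hC),
    abs_le.1 (abs_integral_le_of_abs_le (μ := μ) hC)]

variable [PseudoMetricSpace X] [OpensMeasurableSpace X] [SecondCountableTopology X]

lemma W1_mixture_le [IsProbabilityMeasure ν] [IsProbabilityMeasure μ] (ht₀ : 0 ≤ t)
    (ht₁ : t ≤ 1) : W1 (mixture t ν μ) μ ≤ ENNReal.ofReal (1 - t) * W1 ν μ := by
  have := isProbabilityMeasure_mixture (ν := ν) (μ := μ) ht₀ ht₁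
  refine le_mul_W1 ofReal_ne_top fun π h₁ h₂ => ?_
  -- transport the `ν`-part of the mixture along `π` and leave its `μ`-part in place
  refine (W1_le_lintegral (π := ENNReal.ofReal (1 - t) • π + ENNReal.ofReal t • μ.map Function.diag)
    ?_ ?_).trans ?_
  · rw [Measure.map_add _ _ measurable_fst, Measure.map_smul, Measure.map_smul, h₁,
      map_fst_map_diag, mixture]
  · rw [Measure.map_add _ _ measurable_snd, Measure.map_smul, Measure.map_smul, h₂,
      map_snd_map_diag, ← add_smul, ← ENNReal.ofReal_add (sub_nonneg.2 ht₁) ht₀]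
    simp
  · rw [lintegral_add_measure, lintegral_smul_measure, lintegral_smul_measure,
      lintegral_dist_map_diag, smul_zero, add_zero, smul_eq_mul]

lemma W1_mixture_le_ofReal [IsProbabilityMeasure ν] [IsProbabilityMeasure μ] (ht₀ : 0 ≤ t)
    (ht₁ : t ≤ 1) {s : ℝ} (h : W1 ν μ ≤ ENNReal.ofReal s) :
    W1 (mixture t ν μ) μ ≤ ENNReal.ofReal ((1 - t) * s) := by
  rw [ENNReal.ofReal_mul (sub_nonneg.2 ht₁)]
  exact (W1_mixture_le ht₀ ht₁).trans (by gcongr)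

end Mixture

section RobustValue

variable {d : ℕ} {V : EuclideanSpace ℝ (Fin d) → ℝ} {C : ℝ}
  {μ ν : Measure (EuclideanSpace ℝ (Fin d))} {r : ℝ}

lemma robustVal_le_integral (hbd : ∀ x, |V x| ≤ C) [IsProbabilityMeasure ν]
    (hν₁ : Integrable (fun x => ‖x‖) ν) (hνμ : W1 ν μ ≤ ENNReal.ofReal r) :
    robustVal d V μ r ≤ ∫ x, V x ∂ν := by
  refine csInf_le ⟨-C, ?_⟩ ⟨ν, inferInstance, hν₁, hνμ, rfl⟩
  rintro _ ⟨ν', hν', -, -, rfl⟩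
  exact (abs_le.1 (abs_integral_le_of_abs_le hbd)).1

lemma exists_lt_of_robustVal_lt [IsProbabilityMeasure μ] (hμ₁ : Integrable (fun x => ‖x‖) μ)
    {b : ℝ} (h : robustVal d V μ r < b) :
    ∃ ν, IsProbabilityMeasure ν ∧ Integrable (fun x => ‖x‖) ν ∧ W1 ν μ ≤ ENNReal.ofReal r ∧
      ∫ x, V x ∂ν < b := by
  obtain ⟨_, ⟨ν, hν, hν₁, hνμ, rfl⟩, hb⟩ := exists_lt_of_csInf_lt
    (by exact ⟨_, μ, inferInstance, hμ₁, (W1_self μ).trans_le zero_le, rfl⟩) h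
  exact ⟨ν, hν, hν₁, hνμ, hb⟩

lemma robustVal_le_integral_add (hV : Measurable V) (hbd : ∀ x, |V x| ≤ C)
    [IsProbabilityMeasure μ] (hμ₁ : Integrable (fun x => ‖x‖) μ) [IsProbabilityMeasure ν]
    (hν₁ : Integrable (fun x => ‖x‖) ν) {s t : ℝ} (ht₀ : 0 ≤ t) (ht₁ : t ≤ 1)
    (hνμ : W1 ν μ ≤ ENNReal.ofReal s) (hsr : (1 - t) * s ≤ r) :
    robustVal d V μ r ≤ ∫ x, V x ∂ν + 2 * C * t := by
  have := isProbabilityMeasure_mixture (ν := ν) (μ := μ) ht₀ ht₁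
  exact (robustVal_le_integral hbd (hν₁.mixture hμ₁)
    ((W1_mixture_le_ofReal ht₀ ht₁ hνμ).trans (ofReal_le_ofReal hsr))).trans
    (integral_mixture_le hV hbd ht₀ ht₁)

lemma exists_W1_lt_of_robustVal_lt (hV : Measurable V) (hbd : ∀ x, |V x| ≤ C)
    [IsProbabilityMeasure μ] (hμ₁ : Integrable (fun x => ‖x‖) μ) (hr : 0 < r) {b : ℝ}
    (h : robustVal d V μ r < b) :
    ∃ ν, IsProbabilityMeasure ν ∧ Integrable (fun x => ‖x‖) ν ∧ W1 ν μ < ENNReal.ofReal r ∧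
      ∫ x, V x ∂ν < b := by
  obtain ⟨ν, hν, hν₁, hνμ, hνb⟩ := exists_lt_of_robustVal_lt hμ₁ h
  obtain ⟨t, ht₀, ht₁, hCt⟩ := exists_pos_le_one_mul_lt (2 * C) (sub_pos.2 hνb)
  refine ⟨mixture t ν μ, isProbabilityMeasure_mixture ht₀.le ht₁, hν₁.mixture hμ₁,
    (W1_mixture_le_ofReal ht₀.le ht₁ hνμ).trans_lt ((ofReal_lt_ofReal_iff hr).2 ?_), ?_⟩
  · nlinarith
  · linarith [integral_mixture_le (ν := ν) (μ := μ) hV hbd ht₀.le ht₁]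

lemma robustVal_sub_le_sInf (hV : Measurable V) (hbd : ∀ x, |V x| ≤ C)
    [IsProbabilityMeasure μ] (hμ₁ : Integrable (fun x => ‖x‖) μ)
    {T : Set (Measure (EuclideanSpace ℝ (Fin d)))}
    (hT : ∀ ν ∈ T, IsProbabilityMeasure ν ∧ Integrable (fun x => ‖x‖) ν)
    {μ' : Measure (EuclideanSpace ℝ (Fin d))} (hμ'T : μ' ∈ T) {θ t : ℝ} (hθ : 0 ≤ θ)
    (ht₀ : 0 ≤ t) (ht₁ : t ≤ 1) (hμ' : W1 μ' μ ≤ ENNReal.ofReal (t * θ)) :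
    robustVal d V μ θ - 2 * C * t ≤
      sInf {r | ∃ ν ∈ T, W1 ν μ' ≤ ENNReal.ofReal θ ∧ r = ∫ x, V x ∂ν} := by
  refine le_csInf ⟨_, μ', hμ'T, (W1_self μ').trans_le zero_le, rfl⟩ ?_
  rintro _ ⟨ν, hνT, hνμ', rfl⟩
  have := (hT ν hνT).1
  have := (hT μ' hμ'T).1
  have hνμ : W1 ν μ ≤ ENNReal.ofReal (θ + t * θ) := calc
    W1 ν μ ≤ W1 ν μ' + W1 μ' μ := W1_triangle _ _ _
    _ ≤ ENNReal.ofReal θ + ENNReal.ofReal (t * θ) := add_le_add hνμ' hμ'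
    _ = ENNReal.ofReal (θ + t * θ) := (ofReal_add hθ (by positivity)).symm
  linarith [robustVal_le_integral_add hV hbd hμ₁ (hT ν hνT).2 ht₀ ht₁ hνμ
    (by nlinarith [mul_nonneg (mul_nonneg ht₀ ht₀) hθ] : (1 - t) * (θ + t * θ) ≤ θ)]

end RobustValue

theorem robustVal_filtration_convergence_general (d : ℕ)
    (V : EuclideanSpace ℝ (Fin d) → ℝ) (K : ℝ≥0) (hLip : LipschitzWith K V)
    (C : ℝ) (hbd : ∀ x, |V x| ≤ C) (θ : ℝ) (hθ : 0 < θ)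
    (μ : Measure (EuclideanSpace ℝ (Fin d))) (hμ : IsProbabilityMeasure μ)
    (hμ1 : Integrable (fun x => ‖x‖) μ)
    (S : ℕ → Set (Measure (EuclideanSpace ℝ (Fin d))))
    (hSP : ∀ n, ∀ ν ∈ S n, IsProbabilityMeasure ν ∧ Integrable (fun x => ‖x‖) ν)
    (μn : ℕ → Measure (EuclideanSpace ℝ (Fin d))) (hμnS : ∀ n, μn n ∈ S n)
    (hμnconv : Tendsto (fun n => W1 (μn n) μ) atTop (nhds 0))
    (happrox : ∀ ρ : Measure (EuclideanSpace ℝ (Fin d)),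
      IsProbabilityMeasure ρ → Integrable (fun x => ‖x‖) ρ →
        ∃ ρn : ℕ → Measure (EuclideanSpace ℝ (Fin d)), (∀ n, ρn n ∈ S n) ∧
          Tendsto (fun n => W1 (ρn n) ρ) atTop (nhds 0)) :
    Tendsto (fun n => sInf {r | ∃ ν ∈ S n,
        W1 ν (μn n) ≤ ENNReal.ofReal θ ∧ r = ∫ x, V x ∂ν}) atTop
      (nhds (robustVal d V μ θ)) := by
  have hV : Measurable V := hLip.continuous.measurable
  refine tendsto_order.2 ⟨fun a ha => ?_, fun b hb => ?_⟩
  · obtain ⟨t, ht₀, ht₁, hta⟩ := exists_pos_le_one_mul_lt (2 * C) (sub_pos.2 ha)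
    filter_upwards [hμnconv.eventually_lt_const (ofReal_pos.2 (mul_pos ht₀ hθ))] with n hn
    linarith [robustVal_sub_le_sInf hV hbd hμ1 (hSP n) (hμnS n) hθ.le ht₀.le ht₁ hn.le]
  · obtain ⟨ν, hν, hν₁, hνμ, hνb⟩ := exists_W1_lt_of_robustVal_lt hV hbd hμ1 hθ hb
    obtain ⟨ρ, hρS, hρ⟩ := happrox ν hν hν₁
    have := fun n => (hSP n _ (hρS n)).1
    have hρV : Tendsto (fun n => ∫ x, V x ∂ρ n) atTop (𝓝 (∫ x, V x ∂ν)) :=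
      tendsto_integral_of_tendsto_W1 hLip (fun n => integrable_of_abs_le hV hbd)
        (integrable_of_abs_le hV hbd) hρ
    filter_upwards [eventually_W1_lt hρ hμnconv hνμ, hρV.eventually_lt_const hνb] with n hn hnb
    refine lt_of_le_of_lt (csInf_le ⟨-C, ?_⟩ ⟨ρ n, hρS n, hn.le, rfl⟩) hnb
    rintro _ ⟨ν', hν', -, rfl⟩
    have := (hSP n ν' hν').1
    exact (abs_le.1 (abs_integral_le_of_abs_le hbd)).1

/-- Abstract form of the main convergence theorem: if `(Sₙ)` is a nondecreasing
sequence of sets of probability measures with finite first moment which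
approximates every such measure in `W₁`, and `μₙ ∈ Sₙ` with `W₁(μₙ, μ) → 0`,
then the restricted robust values
`vₙ = inf {∫ V dν : ν ∈ Sₙ, W₁(ν, μₙ) ≤ θ}` converge to the unrestricted
robust value `v = inf {∫ V dν : W₁(ν, μ) ≤ θ}`. -/
theorem robustVal_filtration_convergence (d : ℕ)
    (V : EuclideanSpace ℝ (Fin d) → ℝ) (K : ℝ≥0) (hLip : LipschitzWith K V)
    (C : ℝ) (hbd : ∀ x, |V x| ≤ C) (θ : ℝ) (hθ : 0 < θ)
    (μ : Measure (EuclideanSpace ℝ (Fin d))) (hμ : IsProbabilityMeasure μ)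
    (hμ1 : Integrable (fun x => ‖x‖) μ)
    (S : ℕ → Set (Measure (EuclideanSpace ℝ (Fin d)))) (hSmono : Monotone S)
    (hSP : ∀ n, ∀ ν ∈ S n, IsProbabilityMeasure ν ∧ Integrable (fun x => ‖x‖) ν)
    (μn : ℕ → Measure (EuclideanSpace ℝ (Fin d))) (hμnS : ∀ n, μn n ∈ S n)
    (hμnconv : Tendsto (fun n => W1 (μn n) μ) atTop (nhds 0))
    (happrox : ∀ ρ : Measure (EuclideanSpace ℝ (Fin d)),
      IsProbabilityMeasure ρ → Integrable (fun x => ‖x‖) ρ →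
        ∃ ρn : ℕ → Measure (EuclideanSpace ℝ (Fin d)), (∀ n, ρn n ∈ S n) ∧
          Tendsto (fun n => W1 (ρn n) ρ) atTop (nhds 0)) :
    Tendsto (fun n => sInf {r | ∃ ν ∈ S n,
        W1 ν (μn n) ≤ ENNReal.ofReal θ ∧ r = ∫ x, V x ∂ν}) atTop
      (nhds (robustVal d V μ θ)) :=
  robustVal_filtration_convergence_general d V K hLip C hbd θ hθ μ hμ hμ1 S hSP μn hμnS hμnconv
    happrox
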